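/- arXiv:1410.8348 — 2 statements merged into one kernel-verified Lean document; each statement's English description precedes it below -/
import Mathlib

section
/- For all v in a nonempty closed convex set K ⊆ U and all q ∈ V, the quantity inf over v' ∈ K of J_low(v', q) is a lower bound for J(u) := min over K of J, i.e., inf_{v' ∈ K} J_low(v', q) ≤ J(u), where J_low(v,q) := E_v(y_d) - E_v(q) + ‖v - u_d‖_N² and E_v(q) := a(q,q) - 2ℓ(q) - 2(Bv)(q). -/
/-!
Completing the square with the state equation `a (y v) = ℓ + B v` gives
`J v - Jlow v q = a (y v - q) (y v - q) ≥ 0` for every control `v`, so the infimum of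
`Jlow · q` over `K` lies below `Jlow u q ≤ J u`.
-/

open RealInnerProductSpace

theorem LinearMap.apply_self_sub_two_mul_eq {R M : Type*} [CommRing R] [AddCommGroup M]
    [Module R M] {a : M →ₗ[R] M →ₗ[R] R} (hsym : ∀ x z : M, a x z = a z x)
    {y : M} {f : M → R} (hy : ∀ z : M, a y z = f z) (z : M) :
    a z z - 2 * f z = a (y - z) (y - z) - a y y := by
  simp only [map_sub, LinearMap.sub_apply, ← hy, hsym z y]
  ring

-- In `ℝ`, `sInf` of a set unbounded below is `0`.
theorem Real.sInf_le_of_exists_le_of_nonneg {s : Set ℝ} {b : ℝ} (hs : ∃ x ∈ s, x ≤ b)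
    (hb : 0 ≤ b) : sInf s ≤ b := by
  by_cases hbdd : BddBelow s
  · obtain ⟨x, hx, hxb⟩ := hs
    exact (csInf_le hbdd hx).trans hxb
  · rwa [Real.sInf_of_not_bddBelow hbdd]

theorem lower_bound_inf_le_optimal_cost_general
    {V U : Type*} [NormedAddCommGroup V] [InnerProductSpace ℝ V]
    [NormedAddCommGroup U] [InnerProductSpace ℝ U]
    (a : V →ₗ[ℝ] V →ₗ[ℝ] ℝ)
    (hsym : ∀ q z : V, a q z = a z q)
    (hcoer : ∃ c : ℝ, 0 < c ∧ ∀ q : V, c * ‖q‖ ^ 2 ≤ a q q)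
    (B : U →L[ℝ] (V →L[ℝ] ℝ)) (ℓ : V →L[ℝ] ℝ)
    (y : U → V) (hy : ∀ (v : U) (q : V), a (y v) q = ℓ q + B v q)
    (N : U →L[ℝ] U)
    (hNpos : ∃ κ : ℝ, 0 < κ ∧ ∀ w : U, κ * ‖w‖ ^ 2 ≤ ⟪N w, w⟫)
    (y_d : V) (u_d : U)
    (E : U → V → ℝ)
    (hE : ∀ (v : U) (q : V), E v q = a q q - 2 * ℓ q - 2 * B v q)
    (Jlow : U → V → ℝ)
    (hJlow : ∀ (v : U) (q : V), Jlow v q = E v y_d - E v q + ⟪N (v - u_d), v - u_d⟫)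
    (J : U → ℝ)
    (hJ : ∀ v : U, J v = a (y v - y_d) (y v - y_d) + ⟪N (v - u_d), v - u_d⟫)
    (K : Set U)
    (u : U) (hu : u ∈ K) :
    ∀ q : V, sInf ((fun v' : U => Jlow v' q) '' K) ≤ J u := by
  intro q
  obtain ⟨c, hc, hcoer⟩ := hcoer
  obtain ⟨κ, hκ, hNpos⟩ := hNpos
  have ha_nonneg (z : V) : 0 ≤ a z z := (by positivity : 0 ≤ c * ‖z‖ ^ 2).trans (hcoer z)
  have hN_nonneg (w : U) : 0 ≤ ⟪N w, w⟫ := (by positivity : 0 ≤ κ * ‖w‖ ^ 2).trans (hNpos w)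
  have hE_eq (v : U) (z : V) : E v z = a (y v - z) (y v - z) - a (y v) (y v) := by
    rw [hE, sub_sub, ← mul_add]
    exact a.apply_self_sub_two_mul_eq hsym (hy v) z
  have hJlow_le : Jlow u q ≤ J u := by
    rw [hJlow, hJ, hE_eq, hE_eq]
    linarith [ha_nonneg (y u - q)]
  exact Real.sInf_le_of_exists_le_of_nonneg ⟨Jlow u q, ⟨u, hu, rfl⟩, hJlow_le⟩
    (by rw [hJ]; exact add_nonneg (ha_nonneg _) (hN_nonneg _))

theorem lower_bound_inf_le_optimal_cost
    {V U : Type*} [NormedAddCommGroup V] [InnerProductSpace ℝ V] [CompleteSpace V]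
    [NormedAddCommGroup U] [InnerProductSpace ℝ U] [CompleteSpace U]
    (a : V →ₗ[ℝ] V →ₗ[ℝ] ℝ)
    (hsym : ∀ q z : V, a q z = a z q)
    (hbdd : ∃ C : ℝ, ∀ q z : V, |a q z| ≤ C * ‖q‖ * ‖z‖)
    (hcoer : ∃ c : ℝ, 0 < c ∧ ∀ q : V, c * ‖q‖ ^ 2 ≤ a q q)
    (B : U →L[ℝ] (V →L[ℝ] ℝ)) (ℓ : V →L[ℝ] ℝ)
    (y : U → V) (hy : ∀ (v : U) (q : V), a (y v) q = ℓ q + B v q)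
    (N : U →L[ℝ] U)
    (hNsym : ∀ w w' : U, ⟪N w, w'⟫ = ⟪w, N w'⟫)
    (hNpos : ∃ κ : ℝ, 0 < κ ∧ ∀ w : U, κ * ‖w‖ ^ 2 ≤ ⟪N w, w⟫)
    (y_d : V) (u_d : U)
    (E : U → V → ℝ)
    (hE : ∀ (v : U) (q : V), E v q = a q q - 2 * ℓ q - 2 * B v q)
    (Jlow : U → V → ℝ)
    (hJlow : ∀ (v : U) (q : V), Jlow v q = E v y_d - E v q + ⟪N (v - u_d), v - u_d⟫)
    (J : U → ℝ)
    (hJ : ∀ v : U, J v = a (y v - y_d) (y v - y_d) + ⟪N (v - u_d), v - u_d⟫)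
    (K : Set U) (hK : K.Nonempty) (hKc : IsClosed K) (hKconv : Convex ℝ K)
    (u : U) (hu : u ∈ K) (hmin : ∀ v ∈ K, J u ≤ J v) :
    ∀ q : V, sInf ((fun v' : U => Jlow v' q) '' K) ≤ J u :=
  lower_bound_inf_le_optimal_cost_general a hsym hcoer B ℓ y hy N hNpos y_d u_d E hE Jlow hJlow J hJ
    K u hu
end

section
/- (Positivity of the error measure) In the elliptic optimal control setting with u the minimizer of J over the nonempty closed convex K, the error measure err²(v) := a(y(v)-y(u), y(v)-y(u)) + ‖v-u‖_N² + ⟨J'(u), v-u⟩ is nonnegative for every v ∈ K, and err²(v) = 0 if and only if v = u. -/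
/-!
Along the segment `t ↦ u + t • (v - u)` the state is affine, so the cost is the quadratic
`J u + t L + t² Q`, where `Q = a(y v - y u, y v - y u) + ‖v - u‖²_N` and `L = ⟨J'(u), v - u⟩`;
thus `err²(v) = Q + L`. The midpoint lies in `K`, so minimality at `t = 1/2` gives
`L ≥ -Q/2`, hence `err²(v) ≥ Q/2 ≥ 0`, and `Q` vanishes only at `v = u` by coercivity of `N`.
-/

open RealInnerProductSpace

lemma apply_add_smul_add_smul_of_symm {E : Type*} [AddCommGroup E] [Module ℝ E]
    (b : E →ₗ[ℝ] E →ₗ[ℝ] ℝ) (hb : ∀ x z, b x z = b z x) (x h : E) (t : ℝ) :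
    b (x + t • h) (x + t • h) = b x x + 2 * t * b h x + t ^ 2 * b h h := by
  simp only [map_add, map_smul, LinearMap.add_apply, LinearMap.smul_apply, smul_eq_mul]
  rw [hb x h]
  ring

lemma eq_zero_of_coercive_of_apply_self_nonpos {E : Type*} [NormedAddCommGroup E]
    (b : E → E → ℝ) {c : ℝ} (hc : 0 < c) (hb : ∀ q, c * ‖q‖ ^ 2 ≤ b q q) {x : E}
    (hx : b x x ≤ 0) : x = 0 := by
  have : ‖x‖ ^ 2 ≤ 0 := by nlinarith [hb x]
  simpa using this

section StateEquation

variable {V U : Type*} [NormedAddCommGroup V] [NormedSpace ℝ V]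
  [NormedAddCommGroup U] [InnerProductSpace ℝ U]
  {a : V →ₗ[ℝ] V →ₗ[ℝ] ℝ} {B : U →L[ℝ] V →L[ℝ] ℝ} {ℓ : V →L[ℝ] ℝ} {y : U → V}

lemma state_sub_apply (hy : ∀ v q, a (y v) q = ℓ q + B v q) (u v : U) (q : V) :
    a (y v - y u) q = B (v - u) q := by
  simp only [map_sub, LinearMap.sub_apply, sub_apply, hy]
  ring

lemma state_add_smul_sub {c : ℝ} (hc : 0 < c) (hcoer : ∀ q, c * ‖q‖ ^ 2 ≤ a q q)
    (hy : ∀ v q, a (y v) q = ℓ q + B v q) (u v : U) (t : ℝ) :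
    y (u + t • (v - u)) = y u + t • (y v - y u) := by
  rw [← sub_eq_zero]
  refine eq_zero_of_coercive_of_apply_self_nonpos (fun q z => a q z) hc hcoer (le_of_eq ?_)
  simp only [map_sub, map_add, map_smul, LinearMap.sub_apply, LinearMap.add_apply,
    LinearMap.smul_apply, smul_eq_mul, hy, add_apply, smul_apply, sub_apply]
  ring

lemma cost_add_smul_sub (hsym : ∀ q z, a q z = a z q) {c : ℝ} (hc : 0 < c)
    (hcoer : ∀ q, c * ‖q‖ ^ 2 ≤ a q q) (hy : ∀ v q, a (y v) q = ℓ q + B v q)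
    {N : U →L[ℝ] U} (hNsym : ∀ w w', ⟪N w, w'⟫ = ⟪w, N w'⟫) {y_d : V} {u_d : U} {J : U → ℝ}
    (hJ : ∀ v, J v = a (y v - y_d) (y v - y_d) + ⟪N (v - u_d), v - u_d⟫) (u v : U) (t : ℝ) :
    J (u + t • (v - u)) = J u
      + t * (2 * B (v - u) (y u - y_d) + 2 * ⟪N (u - u_d), v - u⟫)
      + t ^ 2 * (a (y v - y u) (y v - y u) + ⟪N (v - u), v - u⟫) := by
  have hNsymm : ∀ w w', ⟪N w, w'⟫ = ⟪N w', w⟫ := fun w w' => by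
    rw [hNsym, real_inner_comm]
  have hn := apply_add_smul_add_smul_of_symm (innerₗ U ∘ₗ N.toLinearMap) hNsymm
    (u - u_d) (v - u) t
  simp only [LinearMap.comp_apply, innerₗ_apply_apply, ContinuousLinearMap.coe_coe] at hn
  rw [hJ, hJ, state_add_smul_sub hc hcoer hy, add_sub_right_comm, add_sub_right_comm u,
    apply_add_smul_add_smul_of_symm a hsym, hn, state_sub_apply hy, hNsymm (v - u)]
  ring

end StateEquation

theorem error_measure_nonneg_and_vanishes_iff_general
    {V U : Type*} [NormedAddCommGroup V] [InnerProductSpace ℝ V]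
    [NormedAddCommGroup U] [InnerProductSpace ℝ U]
    (K : Set U) (hKconv : Convex ℝ K)
    (a : V →ₗ[ℝ] V →ₗ[ℝ] ℝ)
    (hsym : ∀ q z : V, a q z = a z q)
    (hcoer : ∃ c : ℝ, 0 < c ∧ ∀ q : V, c * ‖q‖ ^ 2 ≤ a q q)
    (B : U →L[ℝ] (V →L[ℝ] ℝ)) (ℓ : V →L[ℝ] ℝ)
    (y : U → V) (hy : ∀ (v : U) (q : V), a (y v) q = ℓ q + B v q)
    (N : U →L[ℝ] U)
    (hNsym : ∀ w w' : U, ⟪N w, w'⟫ = ⟪w, N w'⟫)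
    (hNpos : ∃ κ : ℝ, 0 < κ ∧ ∀ w : U, κ * ‖w‖ ^ 2 ≤ ⟪N w, w⟫)
    (y_d : V) (u_d : U)
    (J : U → ℝ)
    (hJ : ∀ v : U, J v = a (y v - y_d) (y v - y_d) + ⟪N (v - u_d), v - u_d⟫)
    (u : U) (hu : u ∈ K) (hmin : ∀ v ∈ K, J u ≤ J v)
    (err2 : U → ℝ)
    (herr2 : ∀ v : U, err2 v = a (y v - y u) (y v - y u) + ⟪N (v - u), v - u⟫ +
      (2 * B (v - u) (y u - y_d) + 2 * ⟪N (u - u_d), v - u⟫)) :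
    ∀ v ∈ K, 0 ≤ err2 v ∧ (err2 v = 0 ↔ v = u) := by
  obtain ⟨c, hc, hcoer⟩ := hcoer
  obtain ⟨κ, hκ, hNpos⟩ := hNpos
  intro v hv
  have hmid : u + (1 / 2 : ℝ) • (v - u) ∈ K := by
    convert hKconv hu hv (a := 1 / 2) (b := 1 / 2) (by norm_num) (by norm_num) (by norm_num)
      using 1
    module
  have hJmid := hmin _ hmid
  rw [cost_add_smul_sub hsym hc hcoer hy hNsym hJ] at hJmid
  have ha : 0 ≤ a (y v - y u) (y v - y u) := (mul_nonneg hc.le (sq_nonneg _)).trans (hcoer _)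
  have hN : 0 ≤ ⟪N (v - u), v - u⟫ := (mul_nonneg hκ.le (sq_nonneg _)).trans (hNpos _)
  have hhalf : (a (y v - y u) (y v - y u) + ⟪N (v - u), v - u⟫) / 2 ≤ err2 v := by
    rw [herr2]; linarith
  refine ⟨by linarith, fun h0 => ?_, by rintro rfl; simp [herr2]⟩
  exact sub_eq_zero.mp <| eq_zero_of_coercive_of_apply_self_nonpos (fun w w' => ⟪N w, w'⟫)
    hκ hNpos (by linarith)

theorem error_measure_nonneg_and_vanishes_iff
    {V U : Type*} [NormedAddCommGroup V] [InnerProductSpace ℝ V] [CompleteSpace V]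
    [NormedAddCommGroup U] [InnerProductSpace ℝ U] [CompleteSpace U]
    (K : Set U) (hK : K.Nonempty) (hKc : IsClosed K) (hKconv : Convex ℝ K)
    (a : V →ₗ[ℝ] V →ₗ[ℝ] ℝ)
    (hsym : ∀ q z : V, a q z = a z q)
    (hbdd : ∃ C : ℝ, ∀ q z : V, |a q z| ≤ C * ‖q‖ * ‖z‖)
    (hcoer : ∃ c : ℝ, 0 < c ∧ ∀ q : V, c * ‖q‖ ^ 2 ≤ a q q)
    (B : U →L[ℝ] (V →L[ℝ] ℝ)) (ℓ : V →L[ℝ] ℝ)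
    (y : U → V) (hy : ∀ (v : U) (q : V), a (y v) q = ℓ q + B v q)
    (N : U →L[ℝ] U)
    (hNsym : ∀ w w' : U, ⟪N w, w'⟫ = ⟪w, N w'⟫)
    (hNpos : ∃ κ : ℝ, 0 < κ ∧ ∀ w : U, κ * ‖w‖ ^ 2 ≤ ⟪N w, w⟫)
    (y_d : V) (u_d : U)
    (J : U → ℝ)
    (hJ : ∀ v : U, J v = a (y v - y_d) (y v - y_d) + ⟪N (v - u_d), v - u_d⟫)
    (u : U) (hu : u ∈ K) (hmin : ∀ v ∈ K, J u ≤ J v)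
    (err2 : U → ℝ)
    (herr2 : ∀ v : U, err2 v = a (y v - y u) (y v - y u) + ⟪N (v - u), v - u⟫ +
      (2 * B (v - u) (y u - y_d) + 2 * ⟪N (u - u_d), v - u⟫)) :
    ∀ v ∈ K, 0 ≤ err2 v ∧ (err2 v = 0 ↔ v = u) :=
  error_measure_nonneg_and_vanishes_iff_general K hKconv a hsym hcoer B ℓ y hy N hNsym hNpos y_d u_d
    J hJ u hu hmin err2 herr2
end
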